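/- arXiv:1804.05985 — 2 statements merged into one kernel-verified Lean document; each statement's English description precedes it below -/
import Mathlib

section
/- If I = [a,b] is an interval with b − a > 4, then for every nonzero polynomial p with integer coefficients, sup_{x∈I} |p(x)| ≥ 1; consequently t_{ℤ,n}(I) = 1 for every positive integer n (the infimum being achieved by the constant polynomial 1). -/
open Polynomial Filter

/-- The supremum norm of an integer polynomial on the interval `[a, b]`. -/
noncomputable def supNorm (p : Polynomial ℤ) (a b : ℝ) : ℝ :=
  sSup ((fun x => |Polynomial.aeval x p|) '' Set.Icc a b)

/-- `tZ n a b` is the infimum over nonzero integer polynomials `p` of degree at most `n`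
of `(sup_{x ∈ [a,b]} |p(x)|)^(1/n)`. -/
noncomputable def tZ (n : ℕ) (a b : ℝ) : ℝ :=
  sInf {r : ℝ | ∃ p : Polynomial ℤ, p ≠ 0 ∧ p.natDegree ≤ n ∧
    r = supNorm p a b ^ ((1 : ℝ) / n)}

/-!
Chebyshev's extremal property, transported from `[-1, 1]` to an interval of length `L` by an
affine change of variable: a real polynomial of degree `d` bounded by `M` there satisfies
`|leadingCoeff| * (L / 2) ^ d ≤ 2 ^ (d - 1) * M`. A nonzero integer polynomial has
`|leadingCoeff| ≥ 1`, so `L ≥ 4` gives `2 ^ (d - 1) ≤ 2 ^ d ≤ 2 ^ (d - 1) * M`, i.e. `M ≥ 1`;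
the constant polynomial `1` attains this bound.
-/

namespace Polynomial

theorem abs_leadingCoeff_le_of_forall_abs_le_one {P : ℝ[X]}
    (hP : ∀ x ∈ Set.Icc (-1 : ℝ) 1, |P.eval x| ≤ 1) :
    |P.leadingCoeff| ≤ 2 ^ (P.natDegree - 1) := by
  have hneg := Chebyshev.leadingCoeff_le_of_forall_abs_le_one (P := -P) (n := P.natDegree)
    (by simp [degree_le_natDegree]) (by simpa using hP)
  rw [leadingCoeff_neg] at hneg
  exact abs_le.mpr ⟨by linarith,
    Chebyshev.leadingCoeff_le_of_forall_abs_le_one degree_le_natDegree hP⟩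

theorem abs_leadingCoeff_le_of_forall_abs_le {P : ℝ[X]} {M : ℝ}
    (hP : ∀ x ∈ Set.Icc (-1 : ℝ) 1, |P.eval x| ≤ M) :
    |P.leadingCoeff| ≤ 2 ^ (P.natDegree - 1) * M := by
  rcases ((abs_nonneg _).trans (hP 0 (by norm_num))).eq_or_lt with rfl | hM
  · have hP0 : P = 0 := eq_zero_of_infinite_isRoot P <|
      (Set.Icc_infinite (by norm_num : (-1 : ℝ) < 1)).mono fun x hx => abs_nonpos_iff.mp (hP x hx)
    simp [hP0]
  · have hscaled := abs_leadingCoeff_le_of_forall_abs_le_one (P := C M⁻¹ * P) fun x hx => by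
      rw [eval_mul, eval_C, abs_mul, abs_inv, abs_of_pos hM, inv_mul_le_iff₀ hM, mul_one]
      exact hP x hx
    rwa [leadingCoeff_mul, leadingCoeff_C, natDegree_C_mul (inv_ne_zero hM.ne'), abs_mul, abs_inv,
      abs_of_pos hM, inv_mul_le_iff₀ hM, mul_comm] at hscaled

theorem abs_leadingCoeff_mul_pow_le_of_forall_abs_le_on_Icc {P : ℝ[X]} {a b M : ℝ} (hab : a < b)
    (hP : ∀ x ∈ Set.Icc a b, |P.eval x| ≤ M) :
    |P.leadingCoeff| * ((b - a) / 2) ^ P.natDegree ≤ 2 ^ (P.natDegree - 1) * M := by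
  set r := (b - a) / 2
  have hr : 0 < r := by simp only [r]; linarith
  set ℓ : ℝ[X] := C r * X + C ((a + b) / 2)
  have hℓ : ℓ.natDegree = 1 := natDegree_linear hr.ne'
  have hcomp := abs_leadingCoeff_le_of_forall_abs_le (P := P.comp ℓ) (M := M) fun t ht => by
    rw [eval_comp]
    apply hP
    simp only [ℓ, r, eval_add, eval_mul, eval_C, eval_X, Set.mem_Icc]
    constructor <;> nlinarith [ht.1, ht.2]
  rwa [leadingCoeff_comp (by rw [hℓ]; norm_num), natDegree_comp, hℓ, mul_one,
    leadingCoeff_linear hr.ne', abs_mul, abs_pow, abs_of_pos hr] at hcomp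

end Polynomial

theorem abs_aeval_le_supNorm (p : ℤ[X]) {a b x : ℝ} (hx : x ∈ Set.Icc a b) :
    |aeval x p| ≤ supNorm p a b :=
  le_csSup (isCompact_Icc.image (Polynomial.continuous_aeval p).abs).bddAbove (Set.mem_image_of_mem _ hx)

theorem one_le_supNorm {a b : ℝ} (hab : 4 ≤ b - a) {p : ℤ[X]} (hp : p ≠ 0) :
    1 ≤ supNorm p a b := by
  have hinj : Function.Injective (algebraMap ℤ ℝ) := (algebraMap ℤ ℝ).injective_int
  have hcheb := abs_leadingCoeff_mul_pow_le_of_forall_abs_le_on_Icc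
    (P := p.map (algebraMap ℤ ℝ)) (by linarith : a < b) fun x hx => by
      simpa only [eval_map_algebraMap] using abs_aeval_le_supNorm p hx
  rw [leadingCoeff_map_of_injective hinj, natDegree_map_eq_of_injective hinj] at hcheb
  set d := p.natDegree
  have hlead : (1 : ℝ) ≤ |(p.leadingCoeff : ℝ)| := by
    exact_mod_cast Int.one_le_abs (leadingCoeff_ne_zero.mpr hp)
  have hpow : (2 : ℝ) ^ (d - 1) ≤ ((b - a) / 2) ^ d := calc
    (2 : ℝ) ^ (d - 1) ≤ 2 ^ d := pow_le_pow_right₀ one_le_two (Nat.sub_le d 1)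
    _ ≤ ((b - a) / 2) ^ d := pow_le_pow_left₀ zero_le_two (by linarith) d
  refine le_of_mul_le_mul_left ?_ (by positivity : (0 : ℝ) < 2 ^ (d - 1))
  calc (2 : ℝ) ^ (d - 1) * 1 ≤ 1 * ((b - a) / 2) ^ d := by linarith
    _ ≤ |(p.leadingCoeff : ℝ)| * ((b - a) / 2) ^ d := by gcongr
    _ ≤ 2 ^ (d - 1) * supNorm p a b := hcheb

theorem supNorm_one {a b : ℝ} (hab : a ≤ b) : supNorm 1 a b = 1 := by
  simp only [_root_.supNorm, map_one, abs_one]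
  rw [(Set.nonempty_Icc.mpr hab).image_const, csSup_singleton]

theorem tZ_eq_one {a b : ℝ} (hab : 4 ≤ b - a) (n : ℕ) : tZ n a b = 1 := by
  refine IsLeast.csInf_eq ⟨⟨1, one_ne_zero, by simp, ?_⟩, ?_⟩
  · rw [supNorm_one (by linarith), Real.one_rpow]
  · rintro r ⟨p, hp, -, rfl⟩
    exact Real.one_le_rpow (one_le_supNorm hab hp) (by positivity)

theorem stmt_4 (a b : ℝ) (hab : b - a > 4) :
    (∀ p : Polynomial ℤ, p ≠ 0 → 1 ≤ supNorm p a b) ∧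
      (∀ n : ℕ, 0 < n → tZ n a b = 1) :=
  ⟨fun _ hp => one_le_supNorm hab.le hp, fun n _ => tZ_eq_one hab.le n⟩
end

section
/- Let G, F ∈ ℤ[x] with G of degree g, let c > 0, and suppose sup_{x∈[0,1/4]} |G(x)F(x)| ≤ c. Let a, b be integers with a ≥ 1, gcd(a,b) = 1 and b/a ∈ [0,1/4]. If c < |F(b/a)|/a^g, then the linear polynomial a·X − b divides G in ℤ[X]. -/
open Polynomial Filter

namespace Polynomial

theorem algebraMap_eval_scaleRoots {R K : Type*} [CommRing R] [Field K] [Algebra R K]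
    (p : R[X]) (a b : R) (ha : algebraMap R K a ≠ 0) :
    algebraMap R K ((p.scaleRoots a).eval b) =
      algebraMap R K a ^ p.natDegree * aeval (algebraMap R K b / algebraMap R K a) p := by
  have h := scaleRoots_eval₂_mul (p := p) (algebraMap R K)
    (algebraMap R K b / algebraMap R K a) a
  rwa [mul_div_cancel₀ _ ha, eval₂_at_apply] at h

theorem isPrimitive_C_mul_X_sub_C {R : Type*} [CommRing R] {a b : R} (hab : IsCoprime a b) :
    (C a * X - C b).IsPrimitive := by
  intro r hr
  rw [C_dvd_iff_dvd_coeff] at hr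
  refine hab.isUnit_of_dvd' (by simpa using hr 1) ?_
  simpa using hr 0

theorem C_mul_X_sub_C_dvd_of_eval_scaleRoots_eq_zero {R : Type*} [CommRing R] [IsDomain R]
    [IsGCDMonoid R] {p : R[X]} {a b : R} (ha : a ≠ 0) (hab : IsCoprime a b)
    (h : (p.scaleRoots a).eval b = 0) : C a * X - C b ∣ p := by
  let K := FractionRing R
  have ha' : algebraMap R K a ≠ 0 := (IsFractionRing.injective R K).ne_iff' (map_zero _) |>.2 ha
  have hroot : (p.map (algebraMap R K)).IsRoot (algebraMap R K b / algebraMap R K a) := by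
    have := algebraMap_eval_scaleRoots (K := K) p a b ha'
    rw [h, map_zero, eq_comm, mul_eq_zero, aeval_def] at this
    simpa [IsRoot, eval_map, ha'] using this
  have hfactor : (C a * X - C b).map (algebraMap R K) =
      C (algebraMap R K a) * (X - C (algebraMap R K b / algebraMap R K a)) := by
    rw [mul_sub, ← C_mul, mul_div_cancel₀ _ ha']
    simp
  refine (isPrimitive_C_mul_X_sub_C hab).dvd_of_fraction_map_dvd_fraction_map (K := K) ?_
  rw [hfactor, (isUnit_C.mpr (Ne.isUnit ha')).mul_left_dvd]
  exact dvd_iff_isRoot.mpr hroot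

theorem C_mul_X_sub_C_dvd_of_abs_lt_one {G : ℤ[X]} {a b : ℤ} (ha : a ≠ 0) (hab : IsCoprime a b)
    (h : |(a : ℝ) ^ G.natDegree * aeval ((b : ℝ) / a) G| < 1) : C a * X - C b ∣ G := by
  refine C_mul_X_sub_C_dvd_of_eval_scaleRoots_eq_zero ha hab (Int.abs_lt_one_iff.mp ?_)
  have := algebraMap_eval_scaleRoots (K := ℝ) G a b (by simpa using ha)
  simp only [algebraMap_int_eq, eq_intCast] at this
  exact_mod_cast this ▸ h

end Polynomial

theorem stmt_13_general (G F : Polynomial ℤ) (g : ℕ) (hG : G.natDegree = g)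
    (c : ℝ) (hsup : supNorm (G * F) 0 (1 / 4) ≤ c)
    (a b : ℤ) (ha : 1 ≤ a) (hcop : IsCoprime a b)
    (hmem : (b : ℝ) / a ∈ Set.Icc (0 : ℝ) (1 / 4))
    (hlt : c < |Polynomial.aeval ((b : ℝ) / a) F| / (a : ℝ) ^ g) :
    (Polynomial.C a * Polynomial.X - Polynomial.C b) ∣ G := by
  set x : ℝ := (b : ℝ) / a
  have hapow : (0 : ℝ) < (a : ℝ) ^ g := by positivity
  have hGF : |aeval x G| * |aeval x F| ≤ c := by
    simpa only [map_mul, abs_mul] using (abs_aeval_le_supNorm (G * F) hmem).trans hsup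
  have hF : 0 < |aeval x F| :=
    (div_pos_iff_of_pos_right hapow).mp ((by positivity : (0 : ℝ) ≤ _).trans hGF |>.trans_lt hlt)
  refine C_mul_X_sub_C_dvd_of_abs_lt_one (by positivity) hcop ?_
  rw [hG, abs_mul, abs_of_pos hapow]
  have hscaled : (a : ℝ) ^ g * |aeval x G| * |aeval x F| < 1 * |aeval x F| := by
    have h := hGF.trans_lt hlt
    rw [lt_div_iff₀ hapow] at h
    linarith
  exact lt_of_mul_lt_mul_right hscaled hF.le

theorem stmt_13 (G F : Polynomial ℤ) (g : ℕ) (hG : G.natDegree = g)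
    (c : ℝ) (hc : 0 < c) (hsup : supNorm (G * F) 0 (1 / 4) ≤ c)
    (a b : ℤ) (ha : 1 ≤ a) (hcop : IsCoprime a b)
    (hmem : (b : ℝ) / a ∈ Set.Icc (0 : ℝ) (1 / 4))
    (hlt : c < |Polynomial.aeval ((b : ℝ) / a) F| / (a : ℝ) ^ g) :
    (Polynomial.C a * Polynomial.X - Polynomial.C b) ∣ G :=
  stmt_13_general G F g hG c hsup a b ha hcop hmem hlt
end
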